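/- Let y₁ < y₂ < ... < yₙ (n > 4) and consider P₁' = {y₁,...,y_{i−1}, y_{i+1}} and P₂' = {yᵢ, y_{i+2},...,yₙ} obtained from the contiguous partition P₁* = {y₁,...,yᵢ}, P₂* = {y_{i+1},...,yₙ} by swapping yᵢ and y_{i+1}, where 2 ≤ i ≤ n−2. Then the group means satisfy μ(P₁') = μ(P₁*) + (y_{i+1} − yᵢ)/i > μ(P₁*) and μ(P₂') = μ(P₂*) − (y_{i+1} − yᵢ)/(n−i) < μ(P₂*), and SS(P₁') + SS(P₂') ≥ SS(P₁*) + SS(P₂*). -/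

import Mathlib

/-!
Exchanging `a ∈ P` for `b ∉ P` shifts the mean of `P` by `(y b - y a) / #P`, and a direct
expansion of `SS = ∑ y² - #P · μ²` gives
`SS' = SS + 2 (y b - y a)(y a - μ) + (y b - y a)² (1 - 1/#P)`.
For the contiguous split, `y i` is the maximum of the lower block, so it lies above that block's
mean, and `y (i+1)` lies below the upper block's mean; hence both middle terms are nonnegative and
the exchange does not decrease the sum of squares of either block.
-/

open Finset

noncomputable def mu {n : ℕ} (y : Fin n → ℝ) (P : Finset (Fin n)) : ℝ :=
  (∑ j ∈ P, y j) / P.card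

noncomputable def SS {n : ℕ} (y : Fin n → ℝ) (P : Finset (Fin n)) : ℝ :=
  ∑ j ∈ P, (y j - mu y P) ^ 2

section Exchange

variable {n : ℕ} (y : Fin n → ℝ) {P : Finset (Fin n)} {a b : Fin n}

lemma card_mul_mu (P : Finset (Fin n)) : (P.card : ℝ) * mu y P = ∑ j ∈ P, y j := by
  rcases P.eq_empty_or_nonempty with rfl | hP
  · simp
  · have : (P.card : ℝ) ≠ 0 := by exact_mod_cast hP.card_ne_zero
    rw [mu, mul_div_cancel₀ _ this]

lemma SS_eq_sum_sq_sub (P : Finset (Fin n)) :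
    SS y P = ∑ j ∈ P, y j ^ 2 - P.card * mu y P ^ 2 := by
  have hsq : ∀ j ∈ P, (y j - mu y P) ^ 2 = y j ^ 2 - 2 * mu y P * y j + mu y P ^ 2 :=
    fun j _ => by ring
  rw [SS, sum_congr rfl hsq, sum_add_distrib, sum_sub_distrib, ← mul_sum, ← card_mul_mu y P,
    sum_const, nsmul_eq_mul]
  ring

lemma mu_le_of_forall_le {c : ℝ} (hP : P.Nonempty) (h : ∀ j ∈ P, y j ≤ c) : mu y P ≤ c := by
  have hcard : (0 : ℝ) < P.card := by exact_mod_cast hP.card_pos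
  rw [mu, div_le_iff₀ hcard, mul_comm, ← nsmul_eq_mul]
  exact sum_le_card_nsmul P y c h

lemma le_mu_of_forall_le {c : ℝ} (hP : P.Nonempty) (h : ∀ j ∈ P, c ≤ y j) : c ≤ mu y P := by
  have hcard : (0 : ℝ) < P.card := by exact_mod_cast hP.card_pos
  rw [mu, le_div_iff₀ hcard, mul_comm, ← nsmul_eq_mul]
  exact card_nsmul_le_sum P y c h

variable (ha : a ∈ P) (hb : b ∉ P)
include ha hb

lemma sum_exchange (f : Fin n → ℝ) :
    ∑ j ∈ insert b (P.erase a), f j = ∑ j ∈ P, f j - f a + f b := by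
  rw [sum_insert fun h => hb (mem_of_mem_erase h), sum_erase_eq_sub ha]
  ring

lemma card_exchange : (insert b (P.erase a)).card = P.card := by
  rw [card_insert_of_notMem fun h => hb (mem_of_mem_erase h), card_erase_add_one ha]

lemma mu_exchange : mu y (insert b (P.erase a)) = mu y P + (y b - y a) / P.card := by
  have hcard : (P.card : ℝ) ≠ 0 := by exact_mod_cast (card_pos.2 ⟨a, ha⟩).ne'
  rw [mu, mu, sum_exchange ha hb, card_exchange ha hb]
  field_simp
  ring

lemma SS_exchange :
    SS y (insert b (P.erase a)) =
      SS y P + 2 * (y b - y a) * (y a - mu y P) + (y b - y a) ^ 2 * (1 - 1 / P.card) := by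
  have hcard : (P.card : ℝ) ≠ 0 := by exact_mod_cast (card_pos.2 ⟨a, ha⟩).ne'
  rw [SS_eq_sum_sq_sub, SS_eq_sum_sq_sub, sum_exchange ha hb, card_exchange ha hb,
    mu_exchange y ha hb]
  field_simp
  ring

lemma SS_le_SS_exchange (h : 0 ≤ (y b - y a) * (y a - mu y P)) :
    SS y P ≤ SS y (insert b (P.erase a)) := by
  have hcard : (1 : ℝ) ≤ P.card := by exact_mod_cast card_pos.2 ⟨a, ha⟩
  have hfrac : 0 ≤ 1 - 1 / (P.card : ℝ) := by
    rw [sub_nonneg]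
    exact div_le_one_of_le₀ hcard (by positivity)
  rw [SS_exchange y ha hb]
  nlinarith [mul_nonneg (sq_nonneg (y b - y a)) hfrac]

end Exchange

theorem stmt_13 (n i : ℕ) (hi : 2 ≤ i) (hi' : i ≤ n - 2)
    (y : Fin n → ℝ) (hy : StrictMono y)
    (P₁s P₂s P₁' P₂' : Finset (Fin n))
    (hP₁s : P₁s = univ.filter (fun j : Fin n => (j : ℕ) < i))
    (hP₂s : P₂s = univ.filter (fun j : Fin n => i ≤ (j : ℕ)))
    (hP₁' : P₁' = insert ⟨i, by omega⟩ (P₁s.erase ⟨i - 1, by omega⟩))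
    (hP₂' : P₂' = insert ⟨i - 1, by omega⟩ (P₂s.erase ⟨i, by omega⟩)) :
    mu y P₁' = mu y P₁s + (y ⟨i, by omega⟩ - y ⟨i - 1, by omega⟩) / i ∧
    mu y P₁s < mu y P₁' ∧
    mu y P₂' = mu y P₂s - (y ⟨i, by omega⟩ - y ⟨i - 1, by omega⟩) / (n - i) ∧
    mu y P₂' < mu y P₂s ∧
    SS y P₁s + SS y P₂s ≤ SS y P₁' + SS y P₂' := by
  set a : Fin n := ⟨i - 1, by omega⟩
  set b : Fin n := ⟨i, by omega⟩
  have hd : 0 < y b - y a := sub_pos.2 (hy (Fin.mk_lt_mk.2 (by omega)))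
  have ha₁ : a ∈ P₁s := by simp [hP₁s, a]; omega
  have hb₁ : b ∉ P₁s := by simp [hP₁s, b]
  have hb₂ : b ∈ P₂s := by simp [hP₂s, b]
  have ha₂ : a ∉ P₂s := by simp [hP₂s, a]; omega
  have hcard₁ : (P₁s.card : ℝ) = i := by
    rw [show P₁s = Iio b by ext j; simp [hP₁s, Fin.lt_def, b], Fin.card_Iio]
  have hcard₂ : (P₂s.card : ℝ) = n - i := by
    rw [show P₂s = Ici b by ext j; simp [hP₂s, Fin.le_def, b], Fin.card_Ici,
      Nat.cast_sub (by omega)]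
  have hμ₁ : mu y P₁s ≤ y a := mu_le_of_forall_le y ⟨a, ha₁⟩ fun j hj =>
    hy.monotone (Fin.le_def.2 (by simp only [hP₁s, mem_filter] at hj; simp only [a]; omega))
  have hμ₂ : y b ≤ mu y P₂s := le_mu_of_forall_le y ⟨b, hb₂⟩ fun j hj =>
    hy.monotone (Fin.le_def.2 (by simp only [hP₂s, mem_filter] at hj; simp only [b]; omega))
  have hμ₁' := mu_exchange y ha₁ hb₁
  have hμ₂' := mu_exchange y hb₂ ha₂
  rw [hcard₁] at hμ₁'
  rw [hcard₂, ← neg_sub (y b), neg_div, ← sub_eq_add_neg] at hμ₂'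
  have hi₀ : (0 : ℝ) < i := by exact_mod_cast (by omega : 0 < i)
  have hni₀ : (0 : ℝ) < n - i := by rw [← hcard₂]; exact_mod_cast card_pos.2 ⟨b, hb₂⟩
  subst hP₁' hP₂'
  refine ⟨hμ₁', ?_, hμ₂', ?_, add_le_add (SS_le_SS_exchange y ha₁ hb₁ ?_)
    (SS_le_SS_exchange y hb₂ ha₂ ?_)⟩
  · rw [hμ₁']; linarith [div_pos hd hi₀]
  · rw [hμ₂']; linarith [div_pos hd hni₀]
  · nlinarith
  · nlinarith
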